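/- arXiv:2010.05420 — 2 statements merged into one kernel-verified Lean document; each statement's English description precedes it below -/
import Mathlib

section
/- (GMMH* is $\frac{1}{p}$-A$\triangle$U.) Let $n > 1$ with smallest prime divisor $p$, and let $k \geq 1$. For the family of hash functions $h_{\mathbf{x}} : \mathbb{Z}_n^k \to \mathbb{Z}_n$, $h_{\mathbf{x}}(\mathbf{m}) = \sum_{i=1}^k m_i x_i$ (arithmetic in $\mathbb{Z}_n$), indexed by keys $\mathbf{x} \in \mathbb{Z}_n^k$: for any two distinct messages $\mathbf{m}, \mathbf{m}' \in \mathbb{Z}_n^k$ and any $b \in \mathbb{Z}_n$, the number of keys $\mathbf{x} \in \mathbb{Z}_n^k$ with $h_{\mathbf{x}}(\mathbf{m}) - h_{\mathbf{x}}(\mathbf{m}') = b$ is at most $n^k / p$. -/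
/-!
The difference $h_{\mathbf x}(\mathbf m) - h_{\mathbf x}(\mathbf m')$ is the value at $\mathbf x$ of
the nonzero additive map $\mathbf x \mapsto (\mathbf m - \mathbf m') \cdot \mathbf x$. Each fibre of a
homomorphism is empty or a coset of its kernel, and the kernel has index equal to the order of the
image. The image is a nontrivial subgroup of $\mathbb{Z}_n$, so its order is a divisor of $n$ other
than $1$, hence at least $p$.
-/

namespace AddMonoidHom

variable {G H : Type*} [AddGroup G] [AddGroup H]

lemma card_fiber_le_card_ker [Finite G] (φ : G →+ H) (b : H) :
    Nat.card {x // φ x = b} ≤ Nat.card φ.ker := by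
  rcases isEmpty_or_nonempty {x // φ x = b} with _ | ⟨x₀, hx₀⟩
  · simp
  refine Nat.card_le_card_of_injective
    (fun x => ⟨x.1 - x₀, by rw [mem_ker, map_sub, x.2, hx₀, sub_self]⟩) ?_
  intro x y hxy
  exact Subtype.ext (sub_left_inj.mp (congrArg Subtype.val hxy))

lemma card_ker_mul_card_range (φ : G →+ H) :
    Nat.card φ.ker * Nat.card φ.range = Nat.card G := by
  rw [← AddSubgroup.index_ker, AddSubgroup.card_mul_index]

lemma card_ker_le_div_minFac [Finite G] {φ : G →+ H} (hφ : φ ≠ 0) :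
    Nat.card φ.ker ≤ Nat.card G / (Nat.card H).minFac := by
  have : Finite φ.range := .of_surjective _ φ.rangeRestrict_surjective
  have hrange : 1 < Nat.card φ.range :=
    (AddSubgroup.one_lt_card_iff_ne_bot _).mpr (mt range_eq_bot_iff.mp hφ)
  have hminFac : (Nat.card H).minFac ≤ Nat.card φ.range :=
    Nat.minFac_le_of_dvd hrange φ.range.card_addSubgroup_dvd_card
  calc Nat.card φ.ker = Nat.card G / Nat.card φ.range := by
        rw [← card_ker_mul_card_range φ, Nat.mul_div_cancel _ (by omega)]
    _ ≤ Nat.card G / (Nat.card H).minFac := Nat.div_le_div_left hminFac (Nat.minFac_pos _)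

end AddMonoidHom

lemma dotProductBilin_ne_zero {R ι : Type*} [CommSemiring R] [Fintype ι] [DecidableEq ι]
    {v : ι → R} (hv : v ≠ 0) : dotProductBilin R R v ≠ 0 := by
  obtain ⟨j, hj⟩ := Function.ne_iff.mp hv
  intro h
  apply hj
  simpa using LinearMap.congr_fun h (Pi.single j 1)

theorem stmt_8_general (n : ℕ) (hn : 1 < n) (k : ℕ)
    (m m' : Fin k → ZMod n) (hmm : m ≠ m') (b : ZMod n) :
    Nat.card {x : Fin k → ZMod n //
      (∑ i, m i * x i) - (∑ i, m' i * x i) = b} ≤ n ^ k / n.minFac := by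
  have : NeZero n := ⟨by omega⟩
  set φ := (dotProductBilin (ZMod n) (ZMod n) (m - m')).toAddMonoidHom
  have hφ : φ ≠ 0 := fun h =>
    dotProductBilin_ne_zero (sub_ne_zero.mpr hmm) (LinearMap.toAddMonoidHom_injective h)
  have hfiber : ∀ x, (∑ i, m i * x i) - (∑ i, m' i * x i) = b ↔ φ x = b := fun x => by
    change m ⬝ᵥ x - m' ⬝ᵥ x = b ↔ (m - m') ⬝ᵥ x = b
    rw [sub_dotProduct]
  calc _ = Nat.card {x // φ x = b} := Nat.card_congr (Equiv.subtypeEquivRight hfiber)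
    _ ≤ Nat.card φ.ker := φ.card_fiber_le_card_ker b
    _ ≤ Nat.card (Fin k → ZMod n) / (Nat.card (ZMod n)).minFac :=
        AddMonoidHom.card_ker_le_div_minFac hφ
    _ = n ^ k / n.minFac := by simp

theorem stmt_8 (n : ℕ) (hn : 1 < n) (k : ℕ) (hk : 1 ≤ k)
    (m m' : Fin k → ZMod n) (hmm : m ≠ m') (b : ZMod n) :
    Nat.card {x : Fin k → ZMod n //
      (∑ i, m i * x i) - (∑ i, m' i * x i) = b} ≤ n ^ k / n.minFac :=
  stmt_8_general n hn k m m' hmm b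
end

section
/- (Tightness of the GMMH* bound.) Let $n > 1$ with smallest prime divisor $p$, and let $k \geq 1$. There exist two distinct messages $\mathbf{m}, \mathbf{m}' \in \mathbb{Z}_n^k$ and an element $b \in \mathbb{Z}_n$ such that the number of keys $\mathbf{x} \in \mathbb{Z}_n^k$ with $\sum_i m_i x_i - \sum_i m'_i x_i = b$ in $\mathbb{Z}_n$ is exactly $n^k / p$. -/
/-!
Take `m = (n / p) • e₀`, `m' = 0` and `b = 0`. The keys counted are then the kernel of the
homomorphism `x ↦ (n / p) * x₀` on `ZMod n ^ k`, whose image is the cyclic subgroup generated by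
`n / p`, of order `p`; so the kernel has `n ^ k / p` elements.
-/

theorem AddMonoidHom.card_ker_eq_card_div_card_range {G H : Type*} [AddGroup G] [AddGroup H]
    [Finite G] (f : G →+ H) : Nat.card f.ker = Nat.card G / Nat.card f.range := by
  rw [← AddSubgroup.index_ker, ← f.ker.card_mul_index,
    Nat.mul_div_cancel _ (Nat.pos_of_ne_zero AddSubgroup.index_ne_zero_of_finite)]

theorem ZMod.addOrderOf_natCast_div {n d : ℕ} (hn : n ≠ 0) (hd : d ∣ n) :
    addOrderOf ((n / d : ℕ) : ZMod n) = d := by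
  rw [ZMod.addOrderOf_coe _ hn, Nat.gcd_eq_right (Nat.div_dvd_of_dvd hd), Nat.div_div_self hd hn]

theorem ZMod.range_mulLeft {n : ℕ} (c : ZMod n) :
    (AddMonoidHom.mulLeft c).range = AddSubgroup.zmultiples c := by
  ext y
  simp only [AddMonoidHom.mem_range, AddMonoidHom.coe_mulLeft, AddSubgroup.mem_zmultiples_iff,
    zsmul_eq_mul]
  constructor
  · rintro ⟨x, rfl⟩
    exact ⟨x.cast, by rw [ZMod.intCast_zmod_cast, mul_comm]⟩
  · rintro ⟨k, rfl⟩
    exact ⟨k, mul_comm _ _⟩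

theorem ZMod.card_ker_mulLeft_comp_eval {ι : Type*} [Fintype ι] {n : ℕ} [NeZero n]
    (c : ZMod n) (i : ι) :
    Nat.card ((AddMonoidHom.mulLeft c).comp (Pi.evalAddMonoidHom (fun _ : ι => ZMod n) i)).ker
      = n ^ Fintype.card ι / addOrderOf c := by
  have hrange : ((AddMonoidHom.mulLeft c).comp (Pi.evalAddMonoidHom (fun _ : ι => ZMod n) i)).range
      = AddSubgroup.zmultiples c := by
    rw [AddMonoidHom.range_comp,
      AddMonoidHom.range_eq_top_of_surjective _ (Function.surjective_eval i),
      ← AddMonoidHom.range_eq_map, ZMod.range_mulLeft]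
  rw [AddMonoidHom.card_ker_eq_card_div_card_range, hrange, Nat.card_zmultiples, Nat.card_fun,
    Nat.card_zmod, Nat.card_eq_fintype_card]

theorem stmt_9 (n : ℕ) (hn : 1 < n) (k : ℕ) (hk : 1 ≤ k) :
    ∃ (m m' : Fin k → ZMod n) (b : ZMod n), m ≠ m' ∧
      Nat.card {x : Fin k → ZMod n //
        (∑ i, m i * x i) - (∑ i, m' i * x i) = b} = n ^ k / n.minFac := by
  obtain ⟨k, rfl⟩ : ∃ k', k = k' + 1 := ⟨k - 1, by omega⟩
  have : NeZero n := ⟨by omega⟩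
  set p := n.minFac
  have hp : p.Prime := Nat.minFac_prime (by omega)
  set c : ZMod n := ((n / p : ℕ) : ZMod n)
  have hc : addOrderOf c = p := ZMod.addOrderOf_natCast_div (NeZero.ne n) (Nat.minFac_dvd n)
  have hc0 : c ≠ 0 := by
    rintro hc0
    rw [hc0, addOrderOf_zero] at hc
    exact hp.one_lt.ne hc
  refine ⟨Pi.single 0 c, 0, 0, by simpa using hc0, ?_⟩
  have hker : ∀ x : Fin (k + 1) → ZMod n,
      (∑ i, (Pi.single 0 c : Fin (k + 1) → ZMod n) i * x i) -
          (∑ i, (0 : Fin (k + 1) → ZMod n) i * x i) = 0 ↔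
        x ∈ ((AddMonoidHom.mulLeft c).comp (Pi.evalAddMonoidHom _ 0)).ker := by
    intro x
    simp [Pi.single_apply]
  rw [Nat.card_congr (Equiv.subtypeEquivRight hker), ZMod.card_ker_mulLeft_comp_eval, hc,
    Fintype.card_fin]
end
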